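/- Two DAGs G and H on [n] are Markov equivalent under the *-separation criterion if and only if they are Markov equivalent under the d-separation criterion; equivalently, d-separation and *-separation induce the same Markov equivalence classes on DAGs. -/

import Mathlib

/-- A walk in the skeleton of the digraph `E`: consecutive vertices are adjacent. -/
def IsWalk {n : ℕ} (E : Fin n → Fin n → Prop) (p : List (Fin n)) : Prop :=
  p.Chain' fun a b => E a b ∨ E b a

/-- Ancestors of the set `K` (including `K` itself): vertices with a directed path
into `K`. -/
def ancSet {n : ℕ} (E : Fin n → Fin n → Prop) (K : Set (Fin n)) : Set (Fin n) :=
  {v | ∃ k ∈ K, Relation.ReflTransGen E v k}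

/-- A path (as a list of vertices) is d-connecting given `K` if it is a walk in the
skeleton, every collider on it lies in `K ∪ an(K)`, and no non-collider on it lies
in `K`. -/
def DConnecting {n : ℕ} (E : Fin n → Fin n → Prop) (K : Set (Fin n))
    (p : List (Fin n)) : Prop :=
  IsWalk E p ∧
  ∀ a b c : Fin n, [a, b, c] <:+: p →
    ((E a b ∧ E c b) → b ∈ ancSet E K) ∧ (¬(E a b ∧ E c b) → b ∉ K)

open Classical in
/-- The number of colliders on a path. -/
noncomputable def colliderCount {n : ℕ} (E : Fin n → Fin n → Prop) :
    List (Fin n) → ℕ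
  | a :: b :: c :: rest =>
      (if E a b ∧ E c b then 1 else 0) + colliderCount E (b :: c :: rest)
  | _ => 0

/-- A path is *-connecting given `K` if it is d-connecting given `K` and contains at
most one collider. -/
def StarConnecting {n : ℕ} (E : Fin n → Fin n → Prop) (K : Set (Fin n))
    (p : List (Fin n)) : Prop :=
  DConnecting E K p ∧ colliderCount E p ≤ 1

/-- `i` and `j` are d-connected given `K`. -/
def DConn {n : ℕ} (E : Fin n → Fin n → Prop) (K : Set (Fin n)) (i j : Fin n) : Prop :=
  ∃ p : List (Fin n), p.head? = some i ∧ p.getLast? = some j ∧ 2 ≤ p.length ∧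
    DConnecting E K p

/-- `i` and `j` are *-connected given `K`. -/
def StarConn {n : ℕ} (E : Fin n → Fin n → Prop) (K : Set (Fin n)) (i j : Fin n) : Prop :=
  ∃ p : List (Fin n), p.head? = some i ∧ p.getLast? = some j ∧ 2 ≤ p.length ∧
    StarConnecting E K p

/-- `K` d-separates `I` and `J`. -/
def DSep {n : ℕ} (E : Fin n → Fin n → Prop) (I J K : Set (Fin n)) : Prop :=
  ∀ i ∈ I, ∀ j ∈ J, ¬ DConn E K i j

/-- `K` *-separates `I` and `J`. -/
def StarSep {n : ℕ} (E : Fin n → Fin n → Prop) (I J K : Set (Fin n)) : Prop :=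
  ∀ i ∈ I, ∀ j ∈ J, ¬ StarConn E K i j


/-!
Both criteria single out the classes of Verma and Pearl: two DAGs are equivalent iff they have
the same skeleton and the same unshielded colliders.

If the separation statements of `E` and `F` agree, a single edge `a - b` is a *-connecting
path for every conditioning set, whereas non-adjacent `a`, `b` are d-separated by
`an({a, b}) \ {a, b}`; so the skeletons agree. For an unshielded collider `a → b ← c` of `E`,
the set `an_E({a, c}) \ {a, c}` d-separates `a` and `c` in `E` but misses `b`, so the path
`a b c` must be blocked in `F`, i.e. `b` is a collider there too.

Conversely, if `E` and `F` share skeleton and unshielded colliders, a d-connecting walk of `E`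
is turned into one of `F` with no more colliders by removing its defects one at a time:
a vertex that is a non-collider of `F` lying in `K`, or a collider of `F` but not of `E`, is
skipped (it is shielded, or the walk turns back there); a collider `b` of both that is not an
`F`-ancestor of `K` is replaced by the next vertex `u` of a shortest directed `E`-path from `b`
to `K`, which satisfies `u → b` in `F`. Every step decreases `∑ v, (dist_E(v, K) + 1)` along
the walk.
-/

namespace DAG

section Triples

variable {α : Type*}

def triples : List α → List (α × α × α)
  | a :: b :: c :: l => (a, b, c) :: triples (b :: c :: l)
  | _ => []

@[simp] lemma triples_nil : triples ([] : List α) = [] := rfl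

@[simp] lemma triples_singleton (a : α) : triples [a] = [] := rfl

@[simp] lemma triples_pair (a b : α) : triples [a, b] = [] := rfl

@[simp] lemma triples_cons_cons_cons (a b c : α) (l : List α) :
    triples (a :: b :: c :: l) = (a, b, c) :: triples (b :: c :: l) := rfl

lemma triples_cons_cons (a b : α) (l : List α) :
    triples (a :: b :: l) = (l.head?.toList.map fun c => (a, b, c)) ++ triples (b :: l) := by
  cases l <;> simp

lemma triples_append_cons_cons (L : List α) (a b : α) (M : List α) :
    triples (L ++ a :: b :: M) = triples (L ++ [a]) ++
      (L.getLast?.toList.map fun x => (x, a, b)) ++ triples (a :: b :: M) := by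
  induction L using List.twoStepInduction with
  | nil => simp
  | singleton x => simp
  | cons_cons x y L _ ih =>
    cases L with
    | nil => simp
    | cons z L => simp_all [List.getLast?_cons_cons]

lemma mem_triples_iff_infix {a b c : α} {l : List α} :
    (a, b, c) ∈ triples l ↔ [a, b, c] <:+: l := by
  induction l with
  | nil => simp
  | cons x l ih =>
    rw [List.infix_cons_iff, ← ih]
    match l with
    | [] => simp
    | [y] => simp
    | y :: z :: l => simp

lemma mem_triples_iff_exists_append {a b c : α} {l : List α} :
    (a, b, c) ∈ triples l ↔ ∃ L R, l = L ++ a :: b :: c :: R := by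
  rw [mem_triples_iff_infix]
  constructor <;> rintro ⟨L, R, rfl⟩ <;> exact ⟨L, R, by simp⟩

lemma mem_triples_of_mem_getLast? {L M : List α} {a b x : α} (hx : x ∈ L.getLast?) :
    (x, a, b) ∈ triples (L ++ a :: b :: M) := by
  rw [triples_append_cons_cons]
  exact List.mem_append_left _ (List.mem_append_right _
    (List.mem_map_of_mem (Option.mem_toList.2 hx)))

lemma mem_triples_of_mem_head? {L M : List α} {a b y : α} (hy : y ∈ M.head?) :
    (a, b, y) ∈ triples (L ++ a :: b :: M) := by
  rw [triples_append_cons_cons, triples_cons_cons]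
  exact List.mem_append_right _ (List.mem_append_left _
    (List.mem_map_of_mem (Option.mem_toList.2 hy)))

end Triples

lemma exists_suffix_cons_not_mem {α : Type*} {a : α} {p : List α} (ha : a ∈ p) :
    ∃ l, a :: l <:+ p ∧ a ∉ l := by
  induction p with
  | nil => simp at ha
  | cons x p ih =>
    by_cases hp : a ∈ p
    · obtain ⟨l, hl, hal⟩ := ih hp
      exact ⟨l, hl.trans (List.suffix_cons x p), hal⟩
    · obtain rfl : a = x := by simpa [hp] using ha
      exact ⟨p, List.suffix_refl _, hp⟩

lemma two_le_length {α : Type*} {p : List α} {i j : α} (hi : p.head? = some i)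
    (hj : p.getLast? = some j) (hij : i ≠ j) : 2 ≤ p.length := by
  match p with
  | [] => simp at hi
  | [x] => exact absurd ((Option.some.inj hi).symm.trans (Option.some.inj hj)) hij
  | _ :: _ :: _ => simp

variable {n : ℕ} {E F : Fin n → Fin n → Prop} {K : Set (Fin n)}

def Adj (E : Fin n → Fin n → Prop) (a b : Fin n) : Prop := E a b ∨ E b a

def IsCollider (E : Fin n → Fin n → Prop) (a b c : Fin n) : Prop := E a b ∧ E c b

def Unblocked (E : Fin n → Fin n → Prop) (K : Set (Fin n)) (a b c : Fin n) : Prop :=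
  (IsCollider E a b c → b ∈ ancSet E K) ∧ (¬ IsCollider E a b c → b ∉ K)

def IsAcyclic (E : Fin n → Fin n → Prop) : Prop := ∀ i, ¬ Relation.TransGen E i i

section Basic

variable {a b c x : Fin n}

lemma isCollider_comm : IsCollider E a b c ↔ IsCollider E c b a := and_comm

lemma unblocked_comm : Unblocked E K a b c ↔ Unblocked E K c b a := by
  simp only [Unblocked, isCollider_comm]

namespace IsAcyclic

variable (hE : IsAcyclic E)
include hE

lemma not_reflTransGen (h : E a b) : ¬ Relation.ReflTransGen E b a := fun h' =>
  hE a (Relation.TransGen.head' h h')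

lemma irrefl : ¬ E a a := fun h => hE.not_reflTransGen h .refl

lemma asymm (h : E a b) : ¬ E b a := fun h' => hE.not_reflTransGen h (.single h')

lemma not_rel_of_rel_rel (hab : E a b) (hbc : E b c) : ¬ E c a := fun hca =>
  hE.not_reflTransGen hab (.head hbc (.single hca))

lemma ne_of_adj (h : Adj E a b) : a ≠ b := by
  rintro rfl
  exact h.elim hE.irrefl hE.irrefl

end IsAcyclic

lemma mem_ancSet_of_mem (h : a ∈ K) : a ∈ ancSet E K := ⟨a, h, .refl⟩

lemma mem_ancSet_of_rel (h : E a b) (hb : b ∈ ancSet E K) : a ∈ ancSet E K := by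
  obtain ⟨k, hk, hbk⟩ := hb
  exact ⟨k, hk, .head h hbk⟩

lemma ancSet_subset_ancSet {K' : Set (Fin n)} (h : K' ⊆ ancSet E K) :
    ancSet E K' ⊆ ancSet E K := by
  rintro v ⟨k, hk, hvk⟩
  obtain ⟨m, hm, hkm⟩ := h hk
  exact ⟨m, hm, hvk.trans hkm⟩

lemma unblocked_of_rel_of_mem (hE : IsAcyclic E) (hab : E a b) (hb : b ∈ K)
    (h : Unblocked E K x a b) : Unblocked E K x a c :=
  ⟨fun _ => mem_ancSet_of_rel hab (mem_ancSet_of_mem hb),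
    fun _ => h.2 fun h' => hE.asymm hab h'.2⟩

lemma unblocked_of_rel_of_rel (hE : IsAcyclic E) (hab : E a b) (hac : E a c)
    (h : Unblocked E K x a b) : Unblocked E K x a c :=
  ⟨fun h' => absurd h'.2 (hE.asymm hac), fun _ => h.2 fun h' => hE.asymm hab h'.2⟩

end Basic

section Walks

lemma dConnecting_iff {p : List (Fin n)} :
    DConnecting E K p ↔
      p.IsChain (Adj E) ∧ ∀ t ∈ triples p, Unblocked E K t.1 t.2.1 t.2.2 := by
  simp only [Prod.forall, mem_triples_iff_infix]
  rfl

variable {L M : List (Fin n)} {a b : Fin n}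

lemma dConnecting_append_cons_cons :
    DConnecting E K (L ++ a :: b :: M) ↔ DConnecting E K (L ++ [a]) ∧
      (∀ x ∈ L.getLast?, Unblocked E K x a b) ∧ DConnecting E K (a :: b :: M) := by
  simp only [dConnecting_iff, triples_append_cons_cons, List.forall_mem_append,
    List.forall_mem_map, Option.mem_toList]
  rw [List.isChain_split]
  tauto

lemma dConnecting_cons_cons :
    DConnecting E K (a :: b :: M) ↔
      Adj E a b ∧ (∀ y ∈ M.head?, Unblocked E K a b y) ∧ DConnecting E K (b :: M) := by
  simp only [dConnecting_iff, triples_cons_cons, List.forall_mem_append,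
    List.forall_mem_map, Option.mem_toList, List.isChain_cons_cons]
  tauto

lemma dConnecting_singleton : DConnecting E K [a] :=
  ⟨List.isChain_singleton a, fun _ _ _ h => by simpa using h.length_le⟩

lemma _root_.DConnecting.infix {p q : List (Fin n)} (hp : DConnecting E K p) (h : q <:+: p) :
    DConnecting E K q :=
  ⟨List.IsChain.infix hp.1 h, fun _ _ _ hq => hp.2 _ _ _ (hq.trans h)⟩

lemma _root_.DConnecting.adj_adj_unblocked {c : Fin n} {R : List (Fin n)}
    (hp : DConnecting E K (L ++ a :: b :: c :: R)) :
    Adj E a b ∧ Adj E b c ∧ Unblocked E K a b c := by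
  simp only [dConnecting_append_cons_cons, dConnecting_cons_cons] at hp
  exact ⟨hp.2.2.1, hp.2.2.2.2.1, hp.2.2.2.1 c rfl⟩

open Classical in
lemma colliderCount_eq_countP (p : List (Fin n)) :
    colliderCount E p = (triples p).countP fun t => IsCollider E t.1 t.2.1 t.2.2 := by
  induction p using List.twoStepInduction with
  | nil => rfl
  | singleton x => rfl
  | cons_cons x y l _ ih =>
    cases l with
    | nil => rfl
    | cons z l =>
      rw [colliderCount, ih, triples_cons_cons_cons, List.countP_cons, add_comm]
      by_cases h : E x y ∧ E z y <;> simp [IsCollider, h]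

open Classical in
lemma colliderCount_append_cons_cons :
    colliderCount E (L ++ a :: b :: M) = colliderCount E (L ++ [a]) +
      (L.getLast?.toList.countP fun x => IsCollider E x a b) + colliderCount E (a :: b :: M) := by
  simp only [colliderCount_eq_countP, triples_append_cons_cons, List.countP_append,
    List.countP_map]
  rfl

open Classical in
lemma colliderCount_cons_cons :
    colliderCount E (a :: b :: M) =
      (M.head?.toList.countP fun y => IsCollider E a b y) + colliderCount E (b :: M) := by
  simp only [colliderCount_eq_countP, triples_cons_cons, List.countP_append, List.countP_map]
  rfl

lemma colliderCount_le_colliderCount {p : List (Fin n)}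
    (h : ∀ a b c, (a, b, c) ∈ triples p → IsCollider F a b c → IsCollider E a b c) :
    colliderCount F p ≤ colliderCount E p := by
  classical
  simp only [colliderCount_eq_countP]
  exact List.countP_mono_left fun t ht hF => by simpa using h _ _ _ ht (by simpa using hF)

end Walks

section ShortPaths

variable {a b c : Fin n}

lemma starConn_of_adj (h : Adj E a b) : StarConn E K a b :=
  ⟨[a, b], rfl, rfl, le_rfl,
    ⟨dConnecting_cons_cons.2 ⟨h, by simp, dConnecting_singleton⟩,
      by simp [colliderCount]⟩⟩

lemma starConn_of_unblocked (hab : Adj E a b) (hbc : Adj E b c) (h : Unblocked E K a b c) :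
    StarConn E K a c := by
  refine ⟨[a, b, c], rfl, rfl, by simp, ⟨?_, ?_⟩⟩
  · exact dConnecting_cons_cons.2 ⟨hab, by simpa using h,
      dConnecting_cons_cons.2 ⟨hbc, by simp, dConnecting_singleton⟩⟩
  · simp only [colliderCount]
    split <;> omega

lemma dConn_of_starConn {i j : Fin n} (h : StarConn E K i j) : DConn E K i j :=
  let ⟨p, hi, hj, hl, hp⟩ := h
  ⟨p, hi, hj, hl, hp.1⟩

end ShortPaths

section AncestralSeparation

lemma _root_.DConnecting.mem_ancSet_insert_of_rel {v w z : Fin n} {l : List (Fin n)}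
    (hp : DConnecting E K (v :: w :: l)) (hvw : E v w) (hz : (w :: l).getLast? = some z) :
    v ∈ ancSet E (insert z K) := by
  induction l generalizing v w with
  | nil =>
    cases hz
    exact mem_ancSet_of_rel hvw (mem_ancSet_of_mem (Set.mem_insert _ _))
  | cons u l ih =>
    obtain ⟨-, hvwu, hwl⟩ := dConnecting_cons_cons.1 hp
    by_cases hcol : IsCollider E v w u
    · exact mem_ancSet_of_rel hvw (ancSet_subset_ancSet (fun k hk => mem_ancSet_of_mem
        (Set.mem_insert_of_mem _ hk)) ((hvwu u rfl).1 hcol))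
    · have hwu : E w u := (dConnecting_cons_cons.1 hwl).1.resolve_right fun h => hcol ⟨hvw, h⟩
      exact mem_ancSet_of_rel hvw (ih hwl hwu hz)

lemma exists_dConnecting_cons_not_mem {a b : Fin n} (h : DConn E K a b) :
    ∃ l, a ∉ l ∧ (a :: l).getLast? = some b ∧ DConnecting E K (a :: l) := by
  obtain ⟨p, ha, hb, -, hp⟩ := h
  obtain ⟨l, hsuf, hal⟩ := exists_suffix_cons_not_mem (List.mem_of_mem_head? ha)
  refine ⟨l, hal, ?_, DConnecting.infix hp hsuf.isInfix⟩
  rw [List.getLast?_eq_some_getLast (List.cons_ne_nil _ _), hsuf.getLast (List.cons_ne_nil _ _),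
    ← List.getLast?_eq_some_getLast]
  exact hb

lemma not_dConn_of_not_adj (hE : IsAcyclic E) {a b : Fin n} (hab : a ≠ b)
    (hnadj : ¬ Adj E a b) : ¬ DConn E (ancSet E {a, b} \ {a, b}) a b := by
  intro h
  set K₀ := ancSet E {a, b} \ {a, b}
  have hK₀ : ∀ v ∈ ancSet E {a, b}, v ≠ a → v ≠ b → v ∈ K₀ := fun v hv ha hb =>
    ⟨hv, by simp [ha, hb]⟩
  obtain ⟨l, hal, hlast, hq⟩ := exists_dConnecting_cons_not_mem h
  match l, hq, hlast, hal with
  | [], _, h, _ => exact hab (by simpa using h)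
  | [v], hq, h, _ =>
    obtain rfl : v = b := by simpa using h
    exact hnadj (dConnecting_cons_cons.1 hq).1
  | v :: z :: rest, hq, h, hal =>
    obtain ⟨hav, havz, hq'⟩ := dConnecting_cons_cons.1 hq
    have hva : v ≠ a := fun h => hal (by simp [h])
    have hvb : v ≠ b := by rintro rfl; exact hnadj hav
    rcases hav with hav | hva'
    · by_cases hcol : IsCollider E a v z
      · have hvb' : Relation.ReflTransGen E v b := by
          obtain ⟨k, hk, hvk⟩ := ancSet_subset_ancSet (fun _ hv => hv.1) ((havz z rfl).1 hcol)
          rcases hk with rfl | rfl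
          exacts [absurd hvk (hE.not_reflTransGen hav), hvk]
        have hzb : z ≠ b := by rintro rfl; exact hE.not_reflTransGen hcol.2 hvb'
        have hz : z ∈ K₀ :=
          hK₀ z ⟨b, by simp, .head hcol.2 hvb'⟩ (fun h => hal (by simp [h])) hzb
        match rest, h with
        | [], h => exact hzb (by simpa using h)
        | w :: _, _ =>
          exact ((dConnecting_cons_cons.1 hq').2.1 w rfl).2 (fun hc => hE.asymm hcol.2 hc.1) hz
      · have hvz : E v z :=
          (dConnecting_cons_cons.1 hq').1.resolve_right fun h => hcol ⟨hav, h⟩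
        have hv := DConnecting.mem_ancSet_insert_of_rel hq' hvz (by simpa using h)
        have hanc : ancSet E (insert b K₀) ⊆ ancSet E {a, b} := ancSet_subset_ancSet <|
          Set.insert_subset (mem_ancSet_of_mem (by simp)) fun _ hv => hv.1
        exact (havz z rfl).2 hcol (hK₀ v (hanc hv) hva hvb)
    · exact (havz z rfl).2 (fun hc => hE.asymm hc.1 hva')
        (hK₀ v ⟨a, by simp, .single hva'⟩ hva hvb)

end AncestralSeparation

def SameSkeleton (E F : Fin n → Fin n → Prop) : Prop := ∀ a b, Adj E a b ↔ Adj F a b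

def SameUnshieldedColliders (E F : Fin n → Fin n → Prop) : Prop :=
  ∀ a b c, a ≠ c → ¬ Adj E a c → (IsCollider E a b c ↔ IsCollider F a b c)

lemma SameSkeleton.symm (h : SameSkeleton E F) : SameSkeleton F E := fun a b => (h a b).symm

lemma SameUnshieldedColliders.symm (hskel : SameSkeleton E F)
    (h : SameUnshieldedColliders E F) : SameUnshieldedColliders F E := fun a b c hac hadj =>
  (h a b c hac ((hskel a c).not.2 hadj)).symm

def SameConn (C : (Fin n → Fin n → Prop) → Set (Fin n) → Fin n → Fin n → Prop)
    (E F : Fin n → Fin n → Prop) : Prop :=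
  ∀ K i j, i ≠ j → i ∉ K → j ∉ K → (C E K i j ↔ C F K i j)

lemma SameConn.symm {C : (Fin n → Fin n → Prop) → Set (Fin n) → Fin n → Fin n → Prop}
    (h : SameConn C E F) : SameConn C F E :=
  fun K i j hij hi hj => (h K i j hij hi hj).symm

section Criterion

variable {C : (Fin n → Fin n → Prop) → Set (Fin n) → Fin n → Fin n → Prop}
  (hstar : ∀ {E K i j}, StarConn E K i j → C E K i j)
  (hd : ∀ {E K i j}, C E K i j → DConn E K i j)
include hstar hd

lemma adj_of_sameConn (hE : IsAcyclic E) (hF : IsAcyclic F) (h : SameConn C E F)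
    {a b : Fin n} (hab : Adj E a b) : Adj F a b := by
  by_contra hnadj
  have hne := hE.ne_of_adj hab
  exact not_dConn_of_not_adj hF hne hnadj
    (hd ((h _ a b hne (by simp) (by simp)).1 (hstar (starConn_of_adj hab))))

lemma sameSkeleton_of_sameConn (hE : IsAcyclic E) (hF : IsAcyclic F) (h : SameConn C E F) :
    SameSkeleton E F := fun _ _ =>
  ⟨adj_of_sameConn hstar hd hE hF h, adj_of_sameConn hstar hd hF hE h.symm⟩

lemma isCollider_of_sameConn (hE : IsAcyclic E) (h : SameConn C E F)
    (hskel : SameSkeleton E F) {a b c : Fin n} (hac : a ≠ c) (hnadj : ¬ Adj E a c)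
    (hcol : IsCollider E a b c) : IsCollider F a b c := by
  by_contra hcolF
  have hb : b ∉ ancSet E {a, c} \ {a, c} := by
    rintro ⟨⟨k, hk, hbk⟩, -⟩
    rcases hk with rfl | rfl
    exacts [hE.not_reflTransGen hcol.1 hbk, hE.not_reflTransGen hcol.2 hbk]
  have hF : StarConn F (ancSet E {a, c} \ {a, c}) a c :=
    starConn_of_unblocked ((hskel a b).1 (.inl hcol.1)) ((hskel b c).1 (.inr hcol.2))
      ⟨fun h => absurd h hcolF, fun _ => hb⟩
  exact not_dConn_of_not_adj hE hac hnadj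
    (hd ((h _ a c hac (by simp) (by simp)).2 (hstar hF)))

lemma sameUnshieldedColliders_of_sameConn (hE : IsAcyclic E) (hF : IsAcyclic F)
    (h : SameConn C E F) : SameUnshieldedColliders E F := by
  have hskel := sameSkeleton_of_sameConn hstar hd hE hF h
  refine fun a b c hac hnadj => ⟨isCollider_of_sameConn hstar hd hE h hskel hac hnadj,
    isCollider_of_sameConn hstar hd hF h.symm hskel.symm hac ?_⟩
  rwa [← hskel]

end Criterion

section Distance

variable {v w : Fin n}

def reachWithin (E : Fin n → Fin n → Prop) (K : Set (Fin n)) : ℕ → Fin n → Prop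
  | 0, v => v ∈ K
  | m + 1, v => v ∈ K ∨ ∃ w, E v w ∧ reachWithin E K m w

lemma mem_ancSet_iff_exists_reachWithin : v ∈ ancSet E K ↔ ∃ m, reachWithin E K m v := by
  constructor
  · rintro ⟨k, hk, hvk⟩
    induction hvk using Relation.ReflTransGen.head_induction_on with
    | refl => exact ⟨0, hk⟩
    | head h _ ih =>
      obtain ⟨m, hm⟩ := ih
      exact ⟨m + 1, .inr ⟨_, h, hm⟩⟩
  · rintro ⟨m, hm⟩
    induction m generalizing v with
    | zero => exact mem_ancSet_of_mem hm
    | succ m ih =>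
      rcases hm with h | ⟨w, hvw, hw⟩
      exacts [mem_ancSet_of_mem h, mem_ancSet_of_rel hvw (ih hw)]

-- junk value `0` outside `ancSet E K`
noncomputable def ancDist (E : Fin n → Fin n → Prop) (K : Set (Fin n)) (v : Fin n) : ℕ :=
  sInf {m | reachWithin E K m v}

lemma reachWithin_ancDist (h : v ∈ ancSet E K) : reachWithin E K (ancDist E K v) v :=
  Nat.sInf_mem (mem_ancSet_iff_exists_reachWithin.1 h)

lemma ancDist_le {m : ℕ} (h : reachWithin E K m v) : ancDist E K v ≤ m := Nat.sInf_le h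

lemma exists_rel_ancDist_lt (h : v ∈ ancSet E K) (hv : v ∉ K) :
    ∃ w, E v w ∧ w ∈ ancSet E K ∧ ancDist E K w < ancDist E K v := by
  have hr := reachWithin_ancDist h
  rcases hd : ancDist E K v with _ | m
  · rw [hd] at hr
    exact absurd hr hv
  · rw [hd] at hr
    obtain hvK | ⟨w, hvw, hw⟩ := hr
    · exact absurd hvK hv
    · exact ⟨w, hvw, mem_ancSet_iff_exists_reachWithin.2 ⟨m, hw⟩,
        Nat.lt_succ_of_le (ancDist_le hw)⟩

lemma ancDist_le_succ_of_rel (h : E v w) (hw : w ∈ ancSet E K) :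
    ancDist E K v ≤ ancDist E K w + 1 :=
  ancDist_le (.inr ⟨w, h, reachWithin_ancDist hw⟩)

end Distance

section Shielding

variable {a b c : Fin n}

lemma rel_of_rel_of_isCollider (hE : IsAcyclic E) (hUC : SameUnshieldedColliders E F)
    (hab : E a b) (hbc : E b c) (hcol : IsCollider F a b c) : E a c := by
  have hac : a ≠ c := by rintro rfl; exact hE.asymm hab hbc
  by_cases hadj : Adj E a c
  · exact hadj.resolve_right (hE.not_rel_of_rel_rel hab hbc)
  · exact absurd ((hUC a b c hac hadj).2 hcol).2 (hE.asymm hbc)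

lemma exists_reversed_rel_of_not_mem_ancSet (hE : IsAcyclic E) (hskel : SameSkeleton E F)
    (hUC : SameUnshieldedColliders E F) (hb : b ∈ ancSet E K) (hbK : b ∉ K)
    (hbF : b ∉ ancSet F K) :
    ∃ u, E b u ∧ F u b ∧ u ∈ ancSet E K ∧ ancDist E K u < ancDist E K b := by
  induction hd : ancDist E K b using Nat.strong_induction_on generalizing b with
  | _ d ih =>
  obtain ⟨u, hbu, hu, hlt⟩ := exists_rel_ancDist_lt hb hbK
  by_cases hub : F u b
  · exact ⟨u, hbu, hub, hu, hd ▸ hlt⟩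
  exfalso
  have hFbu : F b u := ((hskel b u).1 (.inl hbu)).resolve_right hub
  have huF : u ∉ ancSet F K := fun h => hbF (mem_ancSet_of_rel hFbu h)
  obtain ⟨w, huw, hwu, hw, hwlt⟩ :=
    ih _ (hd ▸ hlt) hu (fun h => huF (mem_ancSet_of_mem h)) huF rfl
  -- the collider `b → u ← w` of `F` forces an edge `b → w` in `E`, too short a way to `K`
  have hbw := rel_of_rel_of_isCollider hE hUC hbu huw ⟨hFbu, hwu⟩
  have := ancDist_le_succ_of_rel (K := K) hbw hw
  omega

lemma isCollider_of_isCollider_shortcut {x : Fin n} (hE : IsAcyclic E)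
    (hnE : ¬ IsCollider E a b c) (hab : Adj E a b) (hbc : Adj E b c)
    (h : IsCollider E x a c) : IsCollider E x a b := by
  refine ⟨h.1, hab.resolve_left fun hab => ?_⟩
  exact hE.not_rel_of_rel_rel hab (hbc.resolve_right fun hcb => hnE ⟨hab, hcb⟩) h.2

lemma unblocked_shortcut_of_not_isCollider {x : Fin n} (hE : IsAcyclic E) (hF : IsAcyclic F)
    (hnE : ¬ IsCollider E a b c) (hFab : F a b) (hab : Adj E a b) (hbc : Adj E b c)
    (hx : ¬ IsCollider F x a b → a ∉ K) (h : Unblocked E K x a b) : Unblocked E K x a c := by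
  refine ⟨fun hc => h.1 (isCollider_of_isCollider_shortcut hE hnE hab hbc hc), fun _ => ?_⟩
  rcases hab with hab | hba
  · exact h.2 fun h' => hE.asymm hab h'.2
  · by_cases hxa : E x a
    · exact hx fun h' => hF.asymm hFab h'.2
    · exact h.2 fun h' => hxa h'.1

end Shielding

section Surgery

variable {L R : List (Fin n)} {a b c u : Fin n}

lemma _root_.DConnecting.shortcut (hp : DConnecting E K (L ++ a :: b :: c :: R))
    (hac : Adj E a c) (hx : ∀ x ∈ L.getLast?, Unblocked E K x a b → Unblocked E K x a c)
    (hy : ∀ y ∈ R.head?, Unblocked E K b c y → Unblocked E K a c y) :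
    DConnecting E K (L ++ a :: c :: R) := by
  simp only [dConnecting_append_cons_cons, dConnecting_cons_cons] at hp ⊢
  obtain ⟨hL, hxab, -, -, -, hbcy, hR⟩ := hp
  exact ⟨hL, fun x h => hx x h (hxab x h), hac, fun y h => hy y h (hbcy y h), hR⟩

lemma _root_.DConnecting.replace (hp : DConnecting E K (L ++ a :: b :: c :: R))
    (hau : Adj E a u) (huc : Adj E u c) (hu : Unblocked E K a u c)
    (hx : ∀ x ∈ L.getLast?, Unblocked E K x a b → Unblocked E K x a u)
    (hy : ∀ y ∈ R.head?, Unblocked E K b c y → Unblocked E K u c y) :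
    DConnecting E K (L ++ a :: u :: c :: R) := by
  simp only [dConnecting_append_cons_cons, dConnecting_cons_cons] at hp ⊢
  obtain ⟨hL, hxab, -, -, -, hbcy, hR⟩ := hp
  exact ⟨hL, fun x h => hx x h (hxab x h), hau, fun _ h => by cases h; exact hu, huc,
    fun y h => hy y h (hbcy y h), hR⟩

lemma _root_.DConnecting.backtrack (hp : DConnecting E K (L ++ a :: b :: a :: R))
    (hxy : ∀ x ∈ L.getLast?, ∀ y ∈ R.head?,
      Unblocked E K x a b → Unblocked E K b a y → Unblocked E K x a y) :
    DConnecting E K (L ++ a :: R) := by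
  cases R with
  | nil => exact (dConnecting_append_cons_cons.1 hp).1
  | cons y R =>
    simp only [dConnecting_append_cons_cons, dConnecting_cons_cons] at hp ⊢
    obtain ⟨hL, hxab, -, -, -, hbay, hR⟩ := hp
    exact ⟨hL, fun x h => hxy x h y rfl (hxab x h) (hbay y rfl), hR⟩

lemma colliderCount_shortcut_le (hx : ∀ x, IsCollider E x a c → IsCollider E x a b)
    (hy : ∀ y, IsCollider E a c y → IsCollider E b c y) :
    colliderCount E (L ++ a :: c :: R) ≤ colliderCount E (L ++ a :: b :: c :: R) := by
  simp only [colliderCount_append_cons_cons, colliderCount_cons_cons]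
  cases L.getLast? <;> cases R.head? <;>
    simp only [Option.toList_none, Option.toList_some, List.countP_nil, List.countP_singleton,
      List.head?_cons] <;>
    split_ifs <;> simp only [decide_eq_true_eq] at * <;>
    first | omega | exact absurd (hx _ ‹_›) ‹_› | exact absurd (hy _ ‹_›) ‹_›

lemma colliderCount_shortcut_le_of_isCollider (hb : IsCollider E a b c)
    (hxy : ∀ x y, IsCollider E x a c → ¬ IsCollider E a c y) :
    colliderCount E (L ++ a :: c :: R) ≤ colliderCount E (L ++ a :: b :: c :: R) := by
  simp only [colliderCount_append_cons_cons, colliderCount_cons_cons]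
  cases L.getLast? <;> cases R.head? <;>
    simp only [Option.toList_none, Option.toList_some, List.countP_nil, List.countP_singleton,
      List.head?_cons] <;>
    split_ifs <;> simp only [decide_eq_true_eq] at * <;>
    first | omega | exact absurd hb ‹_› |
      exact absurd ‹IsCollider E a c _› (hxy _ _ ‹_›)

lemma colliderCount_replace_le (hu : IsCollider E a u c → IsCollider E a b c)
    (hx : ∀ x, IsCollider E x a u → IsCollider E x a b)
    (hy : ∀ y, IsCollider E u c y → IsCollider E b c y) :
    colliderCount E (L ++ a :: u :: c :: R) ≤ colliderCount E (L ++ a :: b :: c :: R) := by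
  simp only [colliderCount_append_cons_cons, colliderCount_cons_cons]
  cases L.getLast? <;> cases R.head? <;>
    simp only [Option.toList_none, Option.toList_some, List.countP_nil, List.countP_singleton,
      List.head?_cons] <;>
    split_ifs <;> simp only [decide_eq_true_eq] at * <;>
    first | omega | exact absurd (hu ‹_›) ‹_› | exact absurd (hx _ ‹_›) ‹_› |
      exact absurd (hy _ ‹_›) ‹_›

lemma colliderCount_backtrack_le
    (h : IsCollider E a b a ∨ ∀ x y, IsCollider E x a y → IsCollider E x a b) :
    colliderCount E (L ++ a :: R) ≤ colliderCount E (L ++ a :: b :: a :: R) := by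
  cases R with
  | nil =>
    rw [colliderCount_append_cons_cons]
    omega
  | cons y R =>
    simp only [colliderCount_append_cons_cons, colliderCount_cons_cons]
    cases L.getLast? <;>
      simp only [Option.toList_none, Option.toList_some, List.countP_nil, List.countP_singleton,
        List.head?_cons] <;>
      split_ifs <;> simp only [decide_eq_true_eq] at * <;>
      first | omega | (rcases h with h | h; contradiction; exact absurd (h _ _ ‹_›) ‹_›)

end Surgery

/-- Every vertex weighs one more than its distance to `K`, so deleting a vertex, or replacing
it by one nearer to `K`, makes a walk lighter. -/
noncomputable def weight (E : Fin n → Fin n → Prop) (K : Set (Fin n)) (p : List (Fin n)) :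
    ℕ :=
  (p.map fun v => ancDist E K v + 1).sum

def Improves (E : Fin n → Fin n → Prop) (K : Set (Fin n)) (q p : List (Fin n)) : Prop :=
  q.head? = p.head? ∧ q.getLast? = p.getLast? ∧ DConnecting E K q ∧
    weight E K q < weight E K p ∧ colliderCount E q ≤ colliderCount E p

section Improves

variable {L R : List (Fin n)} {a b c u : Fin n}

lemma improves_shortcut (hq : DConnecting E K (L ++ a :: c :: R))
    (hc : colliderCount E (L ++ a :: c :: R) ≤ colliderCount E (L ++ a :: b :: c :: R)) :
    Improves E K (L ++ a :: c :: R) (L ++ a :: b :: c :: R) := by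
  refine ⟨by cases L <;> rfl, by simp [List.getLast?_append], hq, ?_, hc⟩
  simp only [weight, List.map_append, List.map_cons, List.sum_append, List.sum_cons]
  omega

lemma improves_backtrack (hq : DConnecting E K (L ++ a :: R))
    (hc : colliderCount E (L ++ a :: R) ≤ colliderCount E (L ++ a :: b :: a :: R)) :
    Improves E K (L ++ a :: R) (L ++ a :: b :: a :: R) := by
  refine ⟨by cases L <;> rfl, by cases R <;> simp [List.getLast?_append], hq, ?_, hc⟩
  simp only [weight, List.map_append, List.map_cons, List.sum_append, List.sum_cons]
  omega

lemma improves_replace (hq : DConnecting E K (L ++ a :: u :: c :: R))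
    (hc : colliderCount E (L ++ a :: u :: c :: R) ≤ colliderCount E (L ++ a :: b :: c :: R))
    (hu : ancDist E K u < ancDist E K b) :
    Improves E K (L ++ a :: u :: c :: R) (L ++ a :: b :: c :: R) := by
  refine ⟨by cases L <;> rfl, by simp [List.getLast?_append], hq, ?_, hc⟩
  simp only [weight, List.map_append, List.map_cons, List.sum_append, List.sum_cons]
  omega

lemma exists_improves_of_not_isCollider_of_mem (hE : IsAcyclic E)
    (hUC : SameUnshieldedColliders E F) (hp : DConnecting E K (L ++ a :: b :: c :: R))
    (hcolF : ¬ IsCollider F a b c) (hbK : b ∈ K) :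
    ∃ q, Improves E K q (L ++ a :: b :: c :: R) := by
  have hcol : IsCollider E a b c := by
    by_contra h
    exact hp.adj_adj_unblocked.2.2.2 h hbK
  by_cases hac : a = c
  · subst hac
    exact ⟨_, improves_backtrack
      (hp.backtrack fun _ _ _ _ h _ => unblocked_of_rel_of_mem hE hcol.1 hbK h)
      (colliderCount_backtrack_le (.inl hcol))⟩
  · have hadj : Adj E a c := by
      by_contra h
      exact hcolF ((hUC a b c hac h).1 hcol)
    refine ⟨_, improves_shortcut (hp.shortcut hadj ?_ ?_)
      (colliderCount_shortcut_le_of_isCollider hcol fun _ _ h h' => hE.asymm h.2 h'.1)⟩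
    · exact fun _ _ h => unblocked_of_rel_of_mem hE hcol.1 hbK h
    · exact fun _ _ h => unblocked_comm.1
        (unblocked_of_rel_of_mem hE hcol.2 hbK (unblocked_comm.1 h))

lemma exists_improves_of_isCollider_of_not_isCollider (hE : IsAcyclic E) (hF : IsAcyclic F)
    (hUC : SameUnshieldedColliders E F) (hp : DConnecting E K (L ++ a :: b :: c :: R))
    (hK : ∀ x y z, (x, y, z) ∈ triples (L ++ a :: b :: c :: R) →
      ¬ IsCollider F x y z → y ∉ K)
    (hcolF : IsCollider F a b c) (hnE : ¬ IsCollider E a b c) :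
    ∃ q, Improves E K q (L ++ a :: b :: c :: R) := by
  obtain ⟨hab, hbc, -⟩ := hp.adj_adj_unblocked
  by_cases hac : a = c
  · subst hac
    have hba : E b a := hab.resolve_left fun h => hnE ⟨h, h⟩
    refine ⟨_, improves_backtrack (hp.backtrack fun x _ y _ hxab hbay =>
      ⟨fun h => hxab.1 ⟨h.1, hba⟩, fun hn => ?_⟩)
      (colliderCount_backtrack_le (.inr fun _ _ h => ⟨h.1, hba⟩))⟩
    by_cases hxa : E x a
    · exact hbay.2 fun h => hn ⟨hxa, h.2⟩
    · exact hxab.2 fun h => hxa h.1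
  · have hadj : Adj E a c := by
      by_contra h
      exact hnE ((hUC a b c hac h).2 hcolF)
    have hnE' : ¬ IsCollider E c b a := fun h => hnE (isCollider_comm.1 h)
    refine ⟨_, improves_shortcut (hp.shortcut hadj (fun x hx => ?_) (fun y hy h => ?_))
      (colliderCount_shortcut_le (fun _ => isCollider_of_isCollider_shortcut hE hnE hab hbc)
        fun _ h => isCollider_comm.1 (isCollider_of_isCollider_shortcut hE hnE' hbc.symm
          hab.symm (isCollider_comm.1 h)))⟩
    · exact unblocked_shortcut_of_not_isCollider hE hF hnE hcolF.1 hab hbc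
        (hK x a b (mem_triples_of_mem_getLast? hx))
    · have hcK : ¬ IsCollider F y c b → c ∉ K := fun h' =>
        hK b c y (by simpa using mem_triples_of_mem_head? (L := L ++ [a]) hy)
          fun h'' => h' (isCollider_comm.1 h'')
      exact unblocked_comm.1 (unblocked_shortcut_of_not_isCollider hE hF hnE' hcolF.2
        hbc.symm hab.symm hcK (unblocked_comm.1 h))

lemma exists_improves_of_not_mem_ancSet (hE : IsAcyclic E) (hskel : SameSkeleton E F)
    (hUC : SameUnshieldedColliders E F) (hp : DConnecting E K (L ++ a :: b :: c :: R))
    (hcolE : IsCollider E a b c) (hcolF : IsCollider F a b c) (hbF : b ∉ ancSet F K) :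
    ∃ q, Improves E K q (L ++ a :: b :: c :: R) := by
  obtain ⟨u, hbu, hub, hu, hlt⟩ := exists_reversed_rel_of_not_mem_ancSet hE hskel hUC
    (hp.adj_adj_unblocked.2.2.1 hcolE) (fun h => hbF (mem_ancSet_of_mem h)) hbF
  have hau := rel_of_rel_of_isCollider hE hUC hcolE.1 hbu ⟨hcolF.1, hub⟩
  have hcu := rel_of_rel_of_isCollider hE hUC hcolE.2 hbu ⟨hcolF.2, hub⟩
  refine ⟨_, improves_replace (hp.replace (.inl hau) (.inr hcu)
    ⟨fun _ => hu, fun h => absurd ⟨hau, hcu⟩ h⟩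
    (fun _ _ => unblocked_of_rel_of_rel hE hcolE.1 hau)
    (fun _ _ h => unblocked_comm.1 (unblocked_of_rel_of_rel hE hcolE.2 hcu (unblocked_comm.1 h))))
    (colliderCount_replace_le (fun _ => hcolE) (fun _ h => absurd h.2 (hE.asymm hau))
      (fun _ h => absurd h.1 (hE.asymm hcu))) hlt⟩

end Improves

section Transfer

lemma _root_.DConnecting.of_sameSkeleton {p : List (Fin n)} (hskel : SameSkeleton E F)
    (hp : DConnecting E K p)
    (hK : ∀ a b c, (a, b, c) ∈ triples p → ¬ IsCollider F a b c → b ∉ K)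
    (hanc : ∀ a b c, (a, b, c) ∈ triples p → IsCollider F a b c → b ∈ ancSet F K) :
    DConnecting F K p := by
  rw [dConnecting_iff] at hp ⊢
  exact ⟨hp.1.imp fun a b => (hskel a b).1, fun t ht => ⟨hanc _ _ _ ht, hK _ _ _ ht⟩⟩

lemma _root_.DConnecting.dConnecting_or_exists_improves (hE : IsAcyclic E) (hF : IsAcyclic F)
    (hskel : SameSkeleton E F) (hUC : SameUnshieldedColliders E F) {p : List (Fin n)}
    (hp : DConnecting E K p) :
    (DConnecting F K p ∧ colliderCount F p ≤ colliderCount E p) ∨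
      ∃ q, Improves E K q p := by
  by_cases h₁ : ∃ a b c, (a, b, c) ∈ triples p ∧ ¬ IsCollider F a b c ∧ b ∈ K
  · obtain ⟨a, b, c, ht, hcolF, hb⟩ := h₁
    obtain ⟨L, R, rfl⟩ := mem_triples_iff_exists_append.1 ht
    exact .inr (exists_improves_of_not_isCollider_of_mem hE hUC hp hcolF hb)
  push Not at h₁
  -- the shortcut of a new collider relies on `h₁` at the neighbouring vertices
  by_cases h₂ :
      ∃ a b c, (a, b, c) ∈ triples p ∧ IsCollider F a b c ∧ ¬ IsCollider E a b c
  · obtain ⟨a, b, c, ht, hcolF, hcolE⟩ := h₂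
    obtain ⟨L, R, rfl⟩ := mem_triples_iff_exists_append.1 ht
    exact .inr (exists_improves_of_isCollider_of_not_isCollider hE hF hUC hp h₁ hcolF hcolE)
  push Not at h₂
  by_cases h₃ : ∃ a b c, (a, b, c) ∈ triples p ∧ IsCollider F a b c ∧ b ∉ ancSet F K
  · obtain ⟨a, b, c, ht, hcolF, hb⟩ := h₃
    obtain ⟨L, R, rfl⟩ := mem_triples_iff_exists_append.1 ht
    exact .inr (exists_improves_of_not_mem_ancSet hE hskel hUC hp (h₂ a b c ht hcolF) hcolF hb)
  push Not at h₃
  exact .inl ⟨hp.of_sameSkeleton hskel h₁ h₃, colliderCount_le_colliderCount h₂⟩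

theorem _root_.DConnecting.exists_dConnecting_of_sameSkeleton (hE : IsAcyclic E)
    (hF : IsAcyclic F) (hskel : SameSkeleton E F) (hUC : SameUnshieldedColliders E F)
    {p : List (Fin n)} (hp : DConnecting E K p) :
    ∃ q, q.head? = p.head? ∧ q.getLast? = p.getLast? ∧ DConnecting F K q ∧
      colliderCount F q ≤ colliderCount E p := by
  induction hw : weight E K p using Nat.strong_induction_on generalizing p with
  | _ w ih =>
  rcases hp.dConnecting_or_exists_improves hE hF hskel hUC with ⟨hq, hc⟩ |
    ⟨q, hh, hl, hq, hlt, hc⟩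
  · exact ⟨p, rfl, rfl, hq, hc⟩
  · obtain ⟨r, hrh, hrl, hr, hrc⟩ := ih _ (hw ▸ hlt) hq rfl
    exact ⟨r, hrh.trans hh, hrl.trans hl, hr, hrc.trans hc⟩

variable {i j : Fin n}

lemma dConn_of_sameSkeleton (hE : IsAcyclic E) (hF : IsAcyclic F) (hskel : SameSkeleton E F)
    (hUC : SameUnshieldedColliders E F) (hij : i ≠ j) (h : DConn E K i j) : DConn F K i j := by
  obtain ⟨p, hi, hj, -, hp⟩ := h
  obtain ⟨q, hqi, hqj, hq, -⟩ :=
    DConnecting.exists_dConnecting_of_sameSkeleton hE hF hskel hUC hp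
  exact ⟨q, hqi.trans hi, hqj.trans hj, two_le_length (hqi.trans hi) (hqj.trans hj) hij, hq⟩

lemma starConn_of_sameSkeleton (hE : IsAcyclic E) (hF : IsAcyclic F) (hskel : SameSkeleton E F)
    (hUC : SameUnshieldedColliders E F) (hij : i ≠ j) (h : StarConn E K i j) :
    StarConn F K i j := by
  obtain ⟨p, hi, hj, -, hp, hc⟩ := h
  obtain ⟨q, hqi, hqj, hq, hqc⟩ :=
    DConnecting.exists_dConnecting_of_sameSkeleton hE hF hskel hUC hp
  exact ⟨q, hqi.trans hi, hqj.trans hj, two_le_length (hqi.trans hi) (hqj.trans hj) hij, hq,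
    hqc.trans hc⟩

end Transfer

lemma sameConn_dConn_iff (hE : IsAcyclic E) (hF : IsAcyclic F) :
    SameConn DConn E F ↔ SameSkeleton E F ∧ SameUnshieldedColliders E F :=
  ⟨fun h => ⟨sameSkeleton_of_sameConn dConn_of_starConn id hE hF h,
    sameUnshieldedColliders_of_sameConn dConn_of_starConn id hE hF h⟩,
    fun ⟨hskel, hUC⟩ _ _ _ hij _ _ => ⟨dConn_of_sameSkeleton hE hF hskel hUC hij,
      dConn_of_sameSkeleton hF hE hskel.symm (hUC.symm hskel) hij⟩⟩

lemma sameConn_starConn_iff (hE : IsAcyclic E) (hF : IsAcyclic F) :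
    SameConn StarConn E F ↔ SameSkeleton E F ∧ SameUnshieldedColliders E F :=
  ⟨fun h => ⟨sameSkeleton_of_sameConn id dConn_of_starConn hE hF h,
    sameUnshieldedColliders_of_sameConn id dConn_of_starConn hE hF h⟩,
    fun ⟨hskel, hUC⟩ _ _ _ hij _ _ => ⟨starConn_of_sameSkeleton hE hF hskel hUC hij,
      starConn_of_sameSkeleton hF hE hskel.symm (hUC.symm hskel) hij⟩⟩

lemma forall_sep_iff_sameConn
    (C : (Fin n → Fin n → Prop) → Set (Fin n) → Fin n → Fin n → Prop) :
    (∀ I J K : Set (Fin n), I.Nonempty → J.Nonempty →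
        Disjoint I J → Disjoint I K → Disjoint J K →
        ((∀ i ∈ I, ∀ j ∈ J, ¬ C E K i j) ↔ (∀ i ∈ I, ∀ j ∈ J, ¬ C F K i j))) ↔
      SameConn C E F := by
  constructor
  · intro h K i j hij hi hj
    have := h {i} {j} K (Set.singleton_nonempty i) (Set.singleton_nonempty j)
      (Set.disjoint_singleton.2 hij) (Set.disjoint_singleton_left.2 hi)
      (Set.disjoint_singleton_left.2 hj)
    simpa [not_iff_not] using this
  · intro h I J K _ _ hIJ hIK hJK
    refine forall₂_congr fun i hi => forall₂_congr fun j hj => not_congr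
      (h K i j ?_ (Set.disjoint_left.1 hIK hi) (Set.disjoint_left.1 hJK hj))
    rintro rfl
    exact Set.disjoint_left.1 hIJ hi hj

end DAG

open DAG in
/-- Two DAGs `E` and `F` on `[n]` are Markov equivalent under the
*-separation criterion if and only if they are Markov equivalent under the
d-separation criterion. -/
theorem markov_equivalence_star_iff_d {n : ℕ} (E F : Fin n → Fin n → Prop)
    (hE : ∀ i, ¬ Relation.TransGen E i i) (hF : ∀ i, ¬ Relation.TransGen F i i) :
    (∀ I J K : Set (Fin n), I.Nonempty → J.Nonempty →
        Disjoint I J → Disjoint I K → Disjoint J K →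
        (StarSep E I J K ↔ StarSep F I J K)) ↔
    (∀ I J K : Set (Fin n), I.Nonempty → J.Nonempty →
        Disjoint I J → Disjoint I K → Disjoint J K →
        (DSep E I J K ↔ DSep F I J K)) :=
  calc _ ↔ SameConn StarConn E F := forall_sep_iff_sameConn StarConn
    _ ↔ SameSkeleton E F ∧ SameUnshieldedColliders E F := sameConn_starConn_iff hE hF
    _ ↔ SameConn DConn E F := (sameConn_dConn_iff hE hF).symm
    _ ↔ _ := (forall_sep_iff_sameConn DConn).symm
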